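/- arXiv:2509.13895 — 4 statements merged into one kernel-verified Lean document; each statement's English description precedes it below -/
import Mathlib

section
/- Let E be a real inner product space, w ∈ E, f_i : E → ℝ differentiable, α > 0, ᾱ > 0 and ψ ≥ 0. Suppose M(θ) = f_i(θ) + (α/2)‖θ − w‖² is ᾱ-strongly convex, and θ* is a ψ-inexact solution, i.e. ‖∇f_i(θ*) + α·(θ* − w)‖ ≤ ψ·‖∇f_i(w)‖. Then ‖θ* − w‖ ≤ ((1 + ψ)/ᾱ)·‖∇f_i(w)‖. -/
/-!
Strong convexity of `M θ = fᵢ θ + (α/2)‖θ - w‖²` makes `∇M` `ᾱ`-strongly monotone, which by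
Cauchy–Schwarz gives `ᾱ‖θ* - w‖ ≤ ‖∇M θ* - ∇M w‖`. Since `∇M w = ∇fᵢ w` and `‖∇M θ*‖ ≤ ψ‖∇fᵢ w‖`
is the inexactness condition, the triangle inequality finishes the proof.
-/

open InnerProductSpace

theorem ConvexOn.le_sub_of_hasFDerivAt {F : Type*} [NormedAddCommGroup F] [NormedSpace ℝ F]
    {f : F → ℝ} {f' : F →L[ℝ] ℝ} {x : F} (hf : ConvexOn ℝ Set.univ f)
    (hx : HasFDerivAt f f' x) (y : F) : f' (y - x) ≤ f y - f x := by
  have hline : ConvexOn ℝ Set.univ (f ∘ AffineMap.lineMap x y) :=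
    hf.comp_affineMap (AffineMap.lineMap x y)
  have hderiv : HasDerivAt (f ∘ AffineMap.lineMap x y) (f' (y - x)) (0 : ℝ) :=
    hx.comp_hasDerivAt_of_eq 0 AffineMap.hasDerivAt_lineMap (AffineMap.lineMap_apply_zero x y).symm
  simpa [slope_def_field] using
    hline.le_slope_of_hasDerivAt (Set.mem_univ 0) (Set.mem_univ 1) one_pos hderiv

section Gradient

variable {E : Type*} [NormedAddCommGroup E] [InnerProductSpace ℝ E] [CompleteSpace E]
  {f : E → ℝ} {f' g' x y : E}

theorem HasGradientAt.add_half_mul_norm_sub_sq (hf : HasGradientAt f f' x) (c : ℝ) (w : E) :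
    HasGradientAt (fun θ => f θ + c / 2 * ‖θ - w‖ ^ 2) (f' + c • (x - w)) x := by
  rw [hasGradientAt_iff_hasFDerivAt] at hf ⊢
  have hsq := (hasStrictFDerivAt_norm_sq (x - w)).hasFDerivAt.comp x
    ((hasFDerivAt_id x).sub_const w)
  refine (hf.add (hsq.const_mul (c / 2))).congr_fderiv ?_
  ext v
  simp
  ring

theorem ConvexOn.inner_sub_nonneg_of_hasGradientAt (hf : ConvexOn ℝ Set.univ f)
    (hx : HasGradientAt f f' x) (hy : HasGradientAt f g' y) : 0 ≤ ⟪f' - g', x - y⟫_ℝ := by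
  have hxy := hf.le_sub_of_hasFDerivAt hx.hasFDerivAt y
  have hyx := hf.le_sub_of_hasFDerivAt hy.hasFDerivAt x
  simp only [toDual_apply_apply] at hxy hyx
  rw [← neg_sub x y, inner_neg_right] at hxy
  rw [inner_sub_left]
  linarith

theorem StrongConvexOn.mul_norm_sub_sq_le_inner_of_hasGradientAt {m : ℝ}
    (hf : StrongConvexOn Set.univ m f) (hx : HasGradientAt f f' x) (hy : HasGradientAt f g' y) :
    m * ‖x - y‖ ^ 2 ≤ ⟪f' - g', x - y⟫_ℝ := by
  have hshift : ∀ z z' : E, HasGradientAt f z' z →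
      HasGradientAt (fun θ => f θ - m / 2 * ‖θ‖ ^ 2) (z' - m • z) z := by
    intro z z' hz
    convert hz.add_half_mul_norm_sub_sq (-m) 0 using 1 <;> simp [sub_eq_add_neg, neg_div]
  have := (strongConvexOn_iff_convex.mp hf).inner_sub_nonneg_of_hasGradientAt
    (hshift x f' hx) (hshift y g' hy)
  rw [sub_sub_sub_comm, ← smul_sub, inner_sub_left, real_inner_smul_left,
    real_inner_self_eq_norm_sq] at this
  linarith

theorem StrongConvexOn.mul_norm_sub_le_norm_sub_of_hasGradientAt {m : ℝ}
    (hf : StrongConvexOn Set.univ m f) (hx : HasGradientAt f f' x) (hy : HasGradientAt f g' y) :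
    m * ‖x - y‖ ≤ ‖f' - g'‖ := by
  rcases (norm_nonneg (x - y)).eq_or_lt with hxy | hxy
  · rw [← hxy, mul_zero]
    exact norm_nonneg _
  · refine le_of_mul_le_mul_right ?_ hxy
    calc m * ‖x - y‖ * ‖x - y‖ = m * ‖x - y‖ ^ 2 := by ring
      _ ≤ ⟪f' - g', x - y⟫_ℝ := hf.mul_norm_sub_sq_le_inner_of_hasGradientAt hx hy
      _ ≤ ‖f' - g'‖ * ‖x - y‖ := real_inner_le_norm _ _

end Gradient

theorem fedssg_inexact_solution_near_anchor_general
    {E : Type*} [NormedAddCommGroup E] [InnerProductSpace ℝ E] [CompleteSpace E]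
    (w : E) (fi : E → ℝ) (hfi : Differentiable ℝ fi)
    (α αbar ψ : ℝ) (hαbar : 0 < αbar)
    (hstrong : ConvexOn ℝ Set.univ
      (fun θ : E => (fi θ + (α / 2) * ‖θ - w‖ ^ 2) - (αbar / 2) * ‖θ‖ ^ 2))
    (θstar : E)
    (hinexact : ‖gradient fi θstar + α • (θstar - w)‖ ≤ ψ * ‖gradient fi w‖) :
    ‖θstar - w‖ ≤ ((1 + ψ) / αbar) * ‖gradient fi w‖ := by
  have hgrad : ∀ θ, HasGradientAt (fun θ => fi θ + (α / 2) * ‖θ - w‖ ^ 2)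
      (gradient fi θ + α • (θ - w)) θ := fun θ =>
    (hfi θ).hasGradientAt.add_half_mul_norm_sub_sq α w
  have hdist := (strongConvexOn_iff_convex.mpr hstrong).mul_norm_sub_le_norm_sub_of_hasGradientAt
    (hgrad θstar) (hgrad w)
  rw [sub_self, smul_zero, add_zero] at hdist
  rw [div_mul_eq_mul_div, le_div_iff₀' hαbar]
  calc αbar * ‖θstar - w‖
      ≤ ‖gradient fi θstar + α • (θstar - w) - gradient fi w‖ := hdist
    _ ≤ ‖gradient fi θstar + α • (θstar - w)‖ + ‖gradient fi w‖ := norm_sub_le _ _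
    _ ≤ (1 + ψ) * ‖gradient fi w‖ := by linarith

/-- A `ψ`-inexact solution of the strongly convex proximal objective stays
within `((1+ψ)/αbar)·‖∇fᵢ(w)‖` of the anchor `w`. -/
theorem fedssg_inexact_solution_near_anchor
    {E : Type*} [NormedAddCommGroup E] [InnerProductSpace ℝ E] [CompleteSpace E]
    (w : E) (fi : E → ℝ) (hfi : Differentiable ℝ fi)
    (α αbar ψ : ℝ) (hα : 0 < α) (hαbar : 0 < αbar) (hψ : 0 ≤ ψ)
    (hstrong : ConvexOn ℝ Set.univ
      (fun θ : E => (fi θ + (α / 2) * ‖θ - w‖ ^ 2) - (αbar / 2) * ‖θ‖ ^ 2))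
    (θstar : E)
    (hinexact : ‖gradient fi θstar + α • (θstar - w)‖ ≤ ψ * ‖gradient fi w‖) :
    ‖θstar - w‖ ≤ ((1 + ψ) / αbar) * ‖gradient fi w‖ :=
  fedssg_inexact_solution_near_anchor_general w fi hfi α αbar ψ hαbar hstrong θstar hinexact
end

section
/- Let E be a real inner product space, N ≥ 1, f_i : E → ℝ differentiable with L-Lipschitz gradient for each i = 1,…,N, f = (1/N)·Σ_i f_i, and w ∈ E. Let ᾱ > 0, ψ ≥ 0, B ≥ 0, and suppose: (a) ‖θ_i − w‖ ≤ ((1 + ψ)/ᾱ)·‖∇f_i(w)‖ for all i; (b) e_1,…,e_N ∈ E satisfy ‖e_i‖ ≤ ψ·‖∇f_i(w)‖; (c) the family (f_i) is B-dissimilar at w, i.e. (1/N)·Σ_i ‖∇f_i(w)‖² ≤ B²·‖∇f(w)‖². Then the aggregate error M = (1/N)·Σ_i (∇f_i(θ_i) − ∇f_i(w) − e_i) satisfies ‖M‖ ≤ (L·(1 + ψ)/ᾱ + ψ)·B·‖∇f(w)‖. -/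
open Finset

/-- Bound on the aggregate error `M = (1/N)·Σᵢ (∇fᵢ(θᵢ) − ∇fᵢ(w) − eᵢ)`
under `L`-smoothness, inexactness residual bounds, and `B`-dissimilarity. -/
theorem fedssg_aggregate_error_bound
    {E : Type*} [NormedAddCommGroup E] [InnerProductSpace ℝ E] [CompleteSpace E]
    (N : ℕ) (hN : 1 ≤ N) (f : Fin N → E → ℝ) (hf : ∀ i, Differentiable ℝ (f i))
    (L : ℝ)
    (hsmooth : ∀ i, ∀ x y : E,
      ‖gradient (f i) x - gradient (f i) y‖ ≤ L * ‖x - y‖)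
    (w : E) (αbar ψ B : ℝ) (hαbar : 0 < αbar) (hψ : 0 ≤ ψ) (hB : 0 ≤ B)
    (θ e : Fin N → E)
    (hθ : ∀ i, ‖θ i - w‖ ≤ ((1 + ψ) / αbar) * ‖gradient (f i) w‖)
    (he : ∀ i, ‖e i‖ ≤ ψ * ‖gradient (f i) w‖)
    (hdis : (1 / (N : ℝ)) * ∑ i, ‖gradient (f i) w‖ ^ 2
        ≤ B ^ 2 * ‖gradient (fun x => (1 / (N : ℝ)) * ∑ i, f i x) w‖ ^ 2) :
    ‖(1 / (N : ℝ)) • ∑ i, (gradient (f i) (θ i) - gradient (f i) w - e i)‖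
      ≤ (L * (1 + ψ) / αbar + ψ) * B
          * ‖gradient (fun x => (1 / (N : ℝ)) * ∑ i, f i x) w‖ := by
  rcases subsingleton_or_nontrivial E with hs | hnt
  · have h0 : ∀ x : E, x = 0 := fun x => Subsingleton.elim x 0
    rw [h0 ((1 / (N : ℝ)) • ∑ i, (gradient (f i) (θ i) - gradient (f i) w - e i)),
      h0 (gradient (fun x => (1 / (N : ℝ)) * ∑ i, f i x) w)]
    simp
  -- E nontrivial, so L ≥ 0
  obtain ⟨x, hx⟩ := exists_ne (0 : E)
  have hL : 0 ≤ L := by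
    have h1 := hsmooth ⟨0, hN⟩ x 0
    have h2 : (0:ℝ) < ‖x - 0‖ := by simpa [sub_zero] using norm_pos_iff.mpr hx
    nlinarith [norm_nonneg (gradient (f ⟨0, hN⟩) x - gradient (f ⟨0, hN⟩) 0)]
  set G := ‖gradient (fun x => (1 / (N : ℝ)) * ∑ i, f i x) w‖ with hG
  set a : Fin N → ℝ := fun i => ‖gradient (f i) w‖ with ha
  have hCnn : 0 ≤ L * (1 + ψ) / αbar + ψ := by positivity
  have hNpos : (0:ℝ) < N := by exact_mod_cast hN
  -- per-term bound
  have hterm : ∀ i, ‖gradient (f i) (θ i) - gradient (f i) w - e i‖ ≤ (L * (1 + ψ) / αbar + ψ) * a i := by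
    intro i
    have h1 : ‖gradient (f i) (θ i) - gradient (f i) w - e i‖
        ≤ ‖gradient (f i) (θ i) - gradient (f i) w‖ + ‖e i‖ := norm_sub_le _ _
    have h2 : ‖gradient (f i) (θ i) - gradient (f i) w‖ ≤ L * ‖θ i - w‖ :=
      hsmooth i (θ i) w
    have h3 : L * ‖θ i - w‖ ≤ L * (((1 + ψ) / αbar) * a i) :=
      mul_le_mul_of_nonneg_left (hθ i) hL
    have h4 := he i
    have hai : a i = ‖gradient (f i) w‖ := rfl
    rw [← hai] at h4
    have h5 : L * (((1 + ψ) / αbar) * a i) + ψ * a i = (L * (1 + ψ) / αbar + ψ) * a i := by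
      ring
    linarith
  -- norm of the sum
  have hsum : ‖∑ i, (gradient (f i) (θ i) - gradient (f i) w - e i)‖
      ≤ (L * (1 + ψ) / αbar + ψ) * ∑ i, a i := by
    calc ‖∑ i, (gradient (f i) (θ i) - gradient (f i) w - e i)‖
        ≤ ∑ i, ‖gradient (f i) (θ i) - gradient (f i) w - e i‖ := norm_sum_le _ _
      _ ≤ ∑ i, (L * (1 + ψ) / αbar + ψ) * a i := Finset.sum_le_sum fun i _ => hterm i
      _ = (L * (1 + ψ) / αbar + ψ) * ∑ i, a i := by rw [Finset.mul_sum]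
  -- Cauchy–Schwarz: Σ a ≤ N * B * G
  have hanng : 0 ≤ ∑ i, a i := Finset.sum_nonneg fun i _ => norm_nonneg _
  have hcs : (∑ i, a i) ^ 2 ≤ (N : ℝ) * ∑ i, a i ^ 2 := by
    simpa using sq_sum_le_card_mul_sum_sq (s := Finset.univ) (f := a)
  have hsq : (∑ i, a i) ^ 2 ≤ ((N : ℝ) * B * G) ^ 2 := by
    have h5 : (N : ℝ) * ∑ i, a i ^ 2 ≤ (N : ℝ) * ((N : ℝ) * (B ^ 2 * G ^ 2)) := by
      apply mul_le_mul_of_nonneg_left _ (le_of_lt hNpos)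
      have heq : ∑ i, a i ^ 2 = ∑ i, ‖gradient (f i) w‖ ^ 2 := rfl
      rw [heq]
      have h7 := hdis
      rw [one_div, inv_mul_le_iff₀ hNpos] at h7
      linarith
    nlinarith
  have hGnn : 0 ≤ G := norm_nonneg _
  have hNBG : 0 ≤ (N : ℝ) * B * G := by positivity
  have hsuma : ∑ i, a i ≤ (N : ℝ) * B * G := by
    nlinarith [hsq, hanng, hNBG]
  calc ‖(1 / (N : ℝ)) • ∑ i, (gradient (f i) (θ i) - gradient (f i) w - e i)‖
      = (1 / (N : ℝ)) * ‖∑ i, (gradient (f i) (θ i) - gradient (f i) w - e i)‖ := by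
        rw [norm_smul]; simp [abs_of_pos hNpos]
    _ ≤ (1 / (N : ℝ)) * ((L * (1 + ψ) / αbar + ψ) * ∑ i, a i) := by
        apply mul_le_mul_of_nonneg_left hsum; positivity
    _ ≤ (1 / (N : ℝ)) * ((L * (1 + ψ) / αbar + ψ) * ((N : ℝ) * B * G)) := by
        apply mul_le_mul_of_nonneg_left _ (by positivity)
        exact mul_le_mul_of_nonneg_left hsuma hCnn
    _ = (L * (1 + ψ) / αbar + ψ) * B * G := by field_simp
end

section
/- Let E be a real inner product space, f : E → ℝ differentiable with L-Lipschitz gradient, w ∈ E, and let α > 0, ᾱ > 0, ψ ≥ 0, B ≥ 0, η ≥ 0. Suppose w̄ ∈ E and M ∈ E satisfy: (a) w̄ − w = −(η/α)·(∇f(w) + M); (b) ‖M‖ ≤ (L·(1 + ψ)/ᾱ + ψ)·B·‖∇f(w)‖; (c) ‖w̄ − w‖ ≤ (B·(1 + ψ)·η/ᾱ)·‖∇f(w)‖. Then f(w̄) ≤ f(w) − η·[ (1 − ψ·B)/α − L·B·(1 + ψ)/(α·ᾱ) − L·B²·(1 + ψ)²·η/(2·ᾱ²) ]·‖∇f(w)‖².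 -/
/-!
By the descent inequality, `f w̄ ≤ f w + ⟪∇f w, w̄ - w⟫ + L/2 ‖w̄ - w‖²`. Condition (a) turns the
linear term into `-(η/α)(‖∇f w‖² + ⟪∇f w, M⟫)`, which Cauchy–Schwarz and (b) bound by a multiple
of `‖∇f w‖²`; condition (c) does the same for the quadratic term.
-/

open InnerProductSpace Set

theorem inner_sub_le_mul_sq_of_norm_sub_le {E : Type*} [NormedAddCommGroup E]
    [InnerProductSpace ℝ E] {F : E → E} {L : ℝ}
    (hF : ∀ x y, ‖F x - F y‖ ≤ L * ‖x - y‖) (x v : E) {t : ℝ} (ht : 0 ≤ t) :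
    ⟪F (x + t • v) - F x, v⟫_ℝ ≤ L * t * ‖v‖ ^ 2 :=
  calc ⟪F (x + t • v) - F x, v⟫_ℝ ≤ ‖F (x + t • v) - F x‖ * ‖v‖ := real_inner_le_norm _ _
    _ ≤ L * ‖t • v‖ * ‖v‖ := by
        gcongr
        simpa using hF (x + t • v) x
    _ = L * t * ‖v‖ ^ 2 := by rw [norm_smul, Real.norm_of_nonneg ht]; ring

section GradientLipschitz

variable {E : Type*} [NormedAddCommGroup E] [InnerProductSpace ℝ E] [CompleteSpace E]

theorem DifferentiableAt.hasDerivAt_comp_add_smul {f : E → ℝ} {x v : E} {t : ℝ}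
    (hf : DifferentiableAt ℝ f (x + t • v)) :
    HasDerivAt (fun s : ℝ ↦ f (x + s • v)) ⟪gradient f (x + t • v), v⟫_ℝ t := by
  have hline : HasDerivAt (fun s : ℝ ↦ x + s • v) v t := by
    simpa using ((hasDerivAt_id t).smul_const v).const_add x
  rw [inner_gradient_left]
  exact hf.hasFDerivAt.comp_hasDerivAt t hline

theorem Differentiable.le_add_inner_gradient_add_sq {f : E → ℝ} (hf : Differentiable ℝ f)
    {L : ℝ} (hL : ∀ x y, ‖gradient f x - gradient f y‖ ≤ L * ‖x - y‖) (x y : E) :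
    f y ≤ f x + ⟪gradient f x, y - x⟫_ℝ + L / 2 * ‖y - x‖ ^ 2 := by
  set v := y - x
  -- compare `t ↦ f (x + t v) - t ⟪∇f x, v⟫` on `[0, 1]` with the parabola through its value at `0`
  have hφ (t : ℝ) : HasDerivAt (fun s : ℝ ↦ f (x + s • v) - s * ⟪gradient f x, v⟫_ℝ)
      (⟪gradient f (x + t • v), v⟫_ℝ - ⟪gradient f x, v⟫_ℝ) t :=
    (hf _).hasDerivAt_comp_add_smul.sub (by simpa using (hasDerivAt_id t).mul_const _)
  have hB (t : ℝ) : HasDerivAt (fun s : ℝ ↦ f x + L / 2 * s ^ 2 * ‖v‖ ^ 2)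
      (L * t * ‖v‖ ^ 2) t := by
    refine ((((hasDerivAt_pow 2 t).const_mul (L / 2)).mul_const _).const_add (f x)).congr_deriv ?_
    ring
  have key := image_le_of_deriv_right_le_deriv_boundary
    (fun t _ ↦ (hφ t).continuousAt.continuousWithinAt) (fun t _ ↦ (hφ t).hasDerivWithinAt)
    (by simp) (fun t _ ↦ (hB t).continuousAt.continuousWithinAt)
    (fun t _ ↦ (hB t).hasDerivWithinAt) (fun t ht ↦ by
      rw [← inner_sub_left]; exact inner_sub_le_mul_sq_of_norm_sub_le hL x v ht.1)
    (right_mem_Icc.2 zero_le_one)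
  simp only [one_smul, one_mul, one_pow, v, add_sub_cancel] at key
  linarith

end GradientLipschitz

theorem nonneg_of_norm_sub_le_mul_norm_sub {E F : Type*} [NormedAddCommGroup E]
    [SeminormedAddCommGroup F] {G : E → F} {L : ℝ} (hG : ∀ x y, ‖G x - G y‖ ≤ L * ‖x - y‖)
    {x y : E} (hxy : x ≠ y) : 0 ≤ L :=
  nonneg_of_mul_nonneg_left ((norm_nonneg _).trans (hG x y)) (norm_pos_iff.2 (sub_ne_zero.2 hxy))

theorem real_inner_smul_add_le {E : Type*} [NormedAddCommGroup E] [InnerProductSpace ℝ E]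
    (g M : E) {c : ℝ} (hc : 0 ≤ c) :
    ⟪g, (-c) • (g + M)⟫_ℝ ≤ -c * (‖g‖ ^ 2 - ‖g‖ * ‖M‖) := by
  rw [real_inner_smul_right, inner_add_right, real_inner_self_eq_norm_sq, neg_mul, neg_mul,
    neg_le_neg_iff]
  have hgM : -⟪g, M⟫_ℝ ≤ ‖g‖ * ‖M‖ := by
    simpa only [inner_neg_right, norm_neg] using real_inner_le_norm g (-M)
  exact mul_le_mul_of_nonneg_left (by linarith) hc

theorem fedssg_descent_full_participation_general
    {E : Type*} [NormedAddCommGroup E] [InnerProductSpace ℝ E] [CompleteSpace E]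
    (f : E → ℝ) (hf : Differentiable ℝ f) (L : ℝ)
    (hsmooth : ∀ x y : E, ‖gradient f x - gradient f y‖ ≤ L * ‖x - y‖)
    (w wbar M : E) (α αbar ψ B η : ℝ)
    (hα : 0 < α) (hαbar : 0 < αbar) (hη : 0 ≤ η)
    (ha : wbar - w = (-(η / α)) • (gradient f w + M))
    (hb : ‖M‖ ≤ (L * (1 + ψ) / αbar + ψ) * B * ‖gradient f w‖)
    (hc : ‖wbar - w‖ ≤ (B * (1 + ψ) * η / αbar) * ‖gradient f w‖) :
    f wbar ≤ f w - η * ((1 - ψ * B) / α - L * B * (1 + ψ) / (α * αbar)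
        - L * B ^ 2 * (1 + ψ) ^ 2 * η / (2 * αbar ^ 2)) * ‖gradient f w‖ ^ 2 := by
  set g := gradient f w
  rcases eq_or_ne g 0 with hg | hg
  · obtain rfl : wbar = w := by simpa [hg, sub_eq_zero] using hc
    simp [hg]
  have hL : 0 ≤ L := nonneg_of_norm_sub_le_mul_norm_sub hsmooth (x := w + g) (y := w) (by simpa)
  have hinner : ⟪g, wbar - w⟫_ℝ ≤ -(η / α) * (‖g‖ ^ 2 - ‖g‖ * ‖M‖) :=
    ha ▸ real_inner_smul_add_le g M (by positivity)
  have hgM : ‖g‖ * ‖M‖ ≤ ‖g‖ * ((L * (1 + ψ) / αbar + ψ) * B * ‖g‖) :=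
    mul_le_mul_of_nonneg_left hb (norm_nonneg g)
  have hsq : ‖wbar - w‖ ^ 2 ≤ (B * (1 + ψ) * η / αbar * ‖g‖) ^ 2 :=
    pow_le_pow_left₀ (norm_nonneg _) hc 2
  calc f wbar ≤ f w + ⟪g, wbar - w⟫_ℝ + L / 2 * ‖wbar - w‖ ^ 2 :=
        hf.le_add_inner_gradient_add_sq hsmooth w wbar
    _ ≤ f w - η / α * (‖g‖ ^ 2 - ‖g‖ * ((L * (1 + ψ) / αbar + ψ) * B * ‖g‖))
          + L / 2 * (B * (1 + ψ) * η / αbar * ‖g‖) ^ 2 := by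
        have := mul_le_mul_of_nonneg_left hgM (div_nonneg hη hα.le)
        have := mul_le_mul_of_nonneg_left hsq (by linarith : 0 ≤ L / 2)
        linarith
    _ = _ := by field_simp; ring

/-- Per-round descent for the full-participation averaged iterate
(Eq. (27) of the FedSSG convergence proof). -/
theorem fedssg_descent_full_participation
    {E : Type*} [NormedAddCommGroup E] [InnerProductSpace ℝ E] [CompleteSpace E]
    (f : E → ℝ) (hf : Differentiable ℝ f) (L : ℝ)
    (hsmooth : ∀ x y : E, ‖gradient f x - gradient f y‖ ≤ L * ‖x - y‖)
    (w wbar M : E) (α αbar ψ B η : ℝ)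
    (hα : 0 < α) (hαbar : 0 < αbar) (hψ : 0 ≤ ψ) (hB : 0 ≤ B) (hη : 0 ≤ η)
    (ha : wbar - w = (-(η / α)) • (gradient f w + M))
    (hb : ‖M‖ ≤ (L * (1 + ψ) / αbar + ψ) * B * ‖gradient f w‖)
    (hc : ‖wbar - w‖ ≤ (B * (1 + ψ) * η / αbar) * ‖gradient f w‖) :
    f wbar ≤ f w - η * ((1 - ψ * B) / α - L * B * (1 + ψ) / (α * αbar)
        - L * B ^ 2 * (1 + ψ) ^ 2 * η / (2 * αbar ^ 2)) * ‖gradient f w‖ ^ 2 :=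
  fedssg_descent_full_participation_general f hf L hsmooth w wbar M α αbar ψ B η hα hαbar hη ha hb
    hc
end

section
/- Let E be a real inner product space, N ≥ 1, K ≥ 1, θ_1,…,θ_N ∈ E, w ∈ E, and w̄ = (1/N)·Σ_{i=1}^N θ_i. For each tuple s : {1,…,K} → {1,…,N}, let W(s) = (1/K)·Σ_{k=1}^K θ_{s(k)} be the average over the sampled clients. Then the average over all N^K tuples satisfies (1/N^K)·Σ_s ‖W(s) − w̄‖² ≤ (1/(K·N))·Σ_{i=1}^N ‖θ_i − w̄‖². Moreover, if ᾱ > 0, ψ ≥ 0, B ≥ 0, f_i : E → ℝ are differentiable with f = (1/N)·Σ_i f_i, ‖θ_i − w‖ ≤ ((1 + ψ)/ᾱ)·‖∇f_i(w)‖ for all i, and (1/N)·Σ_i ‖∇f_i(w)‖² ≤ B²·‖∇f(w)‖², then (1/N^K)·Σ_s ‖W(s) − w̄‖² ≤ (2·B²·(1 + ψ)²/(K·ᾱ²))·‖∇f(w)‖². -/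
/-! With `x i = θ i - wbar` centred, `W(s) - wbar = (1/K) • ∑ k, x (s k)`. Expanding
`‖∑ k, x (s k)‖²` and summing over all `N ^ K` tuples, each cross term `⟪x (s k), x (s l)⟫` with
`k ≠ l` sums to zero, leaving `K * N ^ (K - 1) * ∑ i, ‖x i‖²`; the induction on `K` peels off the
first draw. For the second bound, the mean minimises `v ↦ ∑ i, ‖θ i - v‖²`, so the spread around
`wbar` is at most the spread around `w`, which the hypotheses bound by
`N * ((1 + ψ) / αbar)² * B² * ‖∇f(w)‖²`. -/

open Finset

section

variable {ι E : Type*} [Fintype ι] [NormedAddCommGroup E] [InnerProductSpace ℝ E]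

theorem sum_norm_sq_sum_comp_succ {x : ι → E} (hx : ∑ i, x i = 0) (K : ℕ) :
    ∑ s : Fin (K + 1) → ι, ‖∑ k, x (s k)‖ ^ 2
      = (Fintype.card ι : ℝ) ^ K * ∑ i, ‖x i‖ ^ 2
        + Fintype.card ι * ∑ s : Fin K → ι, ‖∑ k, x (s k)‖ ^ 2 := by
  rw [← (Fin.consEquiv fun _ => ι).sum_comp, Fintype.sum_prod_type, sum_comm]
  simp only [Fin.consEquiv_apply, Fin.sum_univ_succ, Fin.cons_zero, Fin.cons_succ,
    norm_add_sq_real, sum_add_distrib]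
  have hcross (s : Fin K → ι) : ∑ i, 2 * inner ℝ (x i) (∑ k, x (s k)) = 0 := by
    rw [← mul_sum, ← sum_inner, hx, inner_zero_left, mul_zero]
  simp only [hcross, sum_const_zero, add_zero, sum_const, card_univ, Fintype.card_fun,
    Fintype.card_fin, nsmul_eq_mul, Nat.cast_pow, mul_sum]

theorem card_mul_sum_norm_sq_sum_comp {x : ι → E} (hx : ∑ i, x i = 0) (K : ℕ) :
    (Fintype.card ι : ℝ) * ∑ s : Fin K → ι, ‖∑ k, x (s k)‖ ^ 2
      = K * (Fintype.card ι : ℝ) ^ K * ∑ i, ‖x i‖ ^ 2 := by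
  induction K with
  | zero => simp
  | succ K ih =>
    rw [sum_norm_sq_sum_comp_succ hx, mul_add, ih]
    push_cast
    ring

theorem one_div_smul_sum_sub {K : ℕ} (hK : K ≠ 0) (y : Fin K → E) (m : E) :
    (1 / (K : ℝ)) • ∑ k, y k - m = (1 / (K : ℝ)) • ∑ k, (y k - m) := by
  rw [sum_sub_distrib, smul_sub, sum_const, card_univ, Fintype.card_fin,
    ← Nat.cast_smul_eq_nsmul ℝ, smul_smul, one_div_mul_cancel (by exact_mod_cast hK), one_smul]

theorem sampling_variance_eq {θ : ι → E} {m : E} (hm : ∑ i, (θ i - m) = 0) {K : ℕ}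
    (hK : K ≠ 0) :
    (1 / (Fintype.card ι : ℝ) ^ K) * ∑ s : Fin K → ι, ‖(1 / (K : ℝ)) • ∑ k, θ (s k) - m‖ ^ 2
      = (1 / ((K : ℝ) * Fintype.card ι)) * ∑ i, ‖θ i - m‖ ^ 2 := by
  have hsum := card_mul_sum_norm_sq_sum_comp hm K
  simp only [one_div_smul_sum_sub hK, norm_smul, norm_div, norm_one, Real.norm_natCast, mul_pow,
    ← mul_sum]
  rcases eq_or_ne (Fintype.card ι : ℝ) 0 with hι | hι
  · simp [hι, hK]
  · field_simp
    linear_combination hsum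

theorem sum_norm_sub_sq_le_of_sum_sub_eq_zero {θ : ι → E} {m : E} (hm : ∑ i, (θ i - m) = 0)
    (w : E) : ∑ i, ‖θ i - m‖ ^ 2 ≤ ∑ i, ‖θ i - w‖ ^ 2 := by
  have hsplit (i : ι) : ‖θ i - w‖ ^ 2
      = ‖θ i - m‖ ^ 2 + 2 * inner ℝ (θ i - m) (m - w) + ‖m - w‖ ^ 2 := by
    rw [← norm_add_sq_real, sub_add_sub_cancel]
  simp only [hsplit, sum_add_distrib, ← mul_sum, ← sum_inner, hm, inner_zero_left, mul_zero,
    add_zero]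
  exact le_add_of_nonneg_right (sum_nonneg fun _ _ => sq_nonneg _)

end

/-- Sampling variance of the partially aggregated model around the
full-participation average (Eq. (32) of the FedSSG proof). -/
theorem fedssg_sampling_variance
    {E : Type*} [NormedAddCommGroup E] [InnerProductSpace ℝ E] [CompleteSpace E]
    (N K : ℕ) (hN : 1 ≤ N) (hK : 1 ≤ K)
    (θ : Fin N → E) (w wbar : E)
    (hwbar : wbar = (1 / (N : ℝ)) • ∑ i, θ i) :
    ((1 / (N : ℝ) ^ K) * ∑ s : Fin K → Fin N,
        ‖(1 / (K : ℝ)) • ∑ k, θ (s k) - wbar‖ ^ 2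
      ≤ (1 / ((K : ℝ) * N)) * ∑ i, ‖θ i - wbar‖ ^ 2)
    ∧ ∀ (αbar ψ B : ℝ) (f : Fin N → E → ℝ),
        0 < αbar → 0 ≤ ψ → 0 ≤ B →
        (∀ i, Differentiable ℝ (f i)) →
        (∀ i, ‖θ i - w‖ ≤ ((1 + ψ) / αbar) * ‖gradient (f i) w‖) →
        ((1 / (N : ℝ)) * ∑ i, ‖gradient (f i) w‖ ^ 2
          ≤ B ^ 2 * ‖gradient (fun x => (1 / (N : ℝ)) * ∑ i, f i x) w‖ ^ 2) →
        (1 / (N : ℝ) ^ K) * ∑ s : Fin K → Fin N,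
            ‖(1 / (K : ℝ)) • ∑ k, θ (s k) - wbar‖ ^ 2
          ≤ (2 * B ^ 2 * (1 + ψ) ^ 2 / ((K : ℝ) * αbar ^ 2))
              * ‖gradient (fun x => (1 / (N : ℝ)) * ∑ i, f i x) w‖ ^ 2 := by
  have hN0 : (N : ℝ) ≠ 0 := by positivity
  have hcentred : ∑ i, (θ i - wbar) = 0 := by
    rw [sum_sub_distrib, sum_const, card_univ, Fintype.card_fin, hwbar,
      ← Nat.cast_smul_eq_nsmul ℝ, smul_smul, mul_one_div_cancel hN0, one_smul, sub_self]
  have hvar := sampling_variance_eq hcentred (K := K) (by omega)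
  rw [Fintype.card_fin] at hvar
  refine ⟨hvar.le, fun αbar ψ B f hα _ _ _ hθ hdis => ?_⟩
  set G := ‖gradient (fun x => (1 / (N : ℝ)) * ∑ i, f i x) w‖
  have hθw : ∑ i, ‖θ i - w‖ ^ 2 ≤ ((1 + ψ) / αbar) ^ 2 * ∑ i, ‖gradient (f i) w‖ ^ 2 := by
    rw [mul_sum]
    gcongr with i
    rw [← mul_pow]
    gcongr
    exact hθ i
  have hgrad : ∑ i, ‖gradient (f i) w‖ ^ 2 ≤ N * (B ^ 2 * G ^ 2) := by
    rwa [one_div, inv_mul_le_iff₀ (by positivity)] at hdis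
  calc _ = (1 / ((K : ℝ) * N)) * ∑ i, ‖θ i - wbar‖ ^ 2 := hvar
    _ ≤ (1 / ((K : ℝ) * N)) * (((1 + ψ) / αbar) ^ 2 * (N * (B ^ 2 * G ^ 2))) := by
      gcongr
      calc _ ≤ ∑ i, ‖θ i - w‖ ^ 2 := sum_norm_sub_sq_le_of_sum_sub_eq_zero hcentred w
        _ ≤ _ := hθw.trans (by gcongr)
    _ = B ^ 2 * (1 + ψ) ^ 2 / (K * αbar ^ 2) * G ^ 2 := by
      field_simp
    _ ≤ 2 * B ^ 2 * (1 + ψ) ^ 2 / (K * αbar ^ 2) * G ^ 2 := by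
      gcongr
      linarith [sq_nonneg B]
end
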